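/- Let M(t) = ∫₀^{|t|} φ(u)(|t|-u) du where φ(u) = 2 for 0 ≤ u ≤ 1 and φ(u) = 8/(1+u)² for u > 1. Then for all a, b ∈ ℝ, M(a) + M(b) - 2·M((a+b)/2) ≤ 16·M((a-b)/2). -/

import Mathlib

/-!
`M` is differentiable with `M' = Φ`, `Φ t = ∫₀ᵗ φ |u| du`. Since `0 ≤ φ ≤ 2`, the function
`t ↦ t² - M t` is convex, which bounds the second difference `M (s+d) + M (s-d) - 2 M s` by `2d²`;
since `φ u ≤ 8 / (1+u)²` for `u ≥ 0`, we have `|Φ| ≤ 8`, which bounds the same second difference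
by `16 |d|`. For `|d| ≤ 1`, `M d = d²`; for `|d| ≥ 1`, convexity of `M` and its tangent at `1`
give `M d ≥ 2|d| - 1 ≥ |d|`.
-/

noncomputable def phi (u : ℝ) : ℝ := if u ≤ 1 then 2 else 8 / (1 + u) ^ 2

noncomputable def M (t : ℝ) : ℝ := ∫ u in (0:ℝ)..|t|, phi u * (|t| - u)

open intervalIntegral

lemma second_diff_le_of_deriv_sub_le {f f' : ℝ → ℝ} {L : ℝ} (hf : ∀ x, HasDerivAt f (f' x) x)
    (hf' : ∀ x y, x ≤ y → f' y - f' x ≤ L * (y - x)) (s d : ℝ) :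
    f (s + d) + f (s - d) - 2 * f s ≤ L * d ^ 2 := by
  set g : ℝ → ℝ := fun x => L / 2 * x ^ 2 - f x
  have hg : ∀ x, HasDerivAt g (L * x - f' x) x := fun x => by
    refine (((hasDerivAt_pow 2 x).const_mul (L / 2)).fun_sub (hf x)).congr_deriv ?_
    push_cast
    ring
  have hconvex : ConvexOn ℝ Set.univ g := by
    refine Monotone.convexOn_univ_of_deriv (fun x => (hg x).differentiableAt) fun x y hxy => ?_
    rw [(hg x).deriv, (hg y).deriv]
    linarith [hf' x y hxy]
  have hmid := hconvex.2 (Set.mem_univ (s + d)) (Set.mem_univ (s - d))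
    (by norm_num : (0:ℝ) ≤ 1 / 2) (by norm_num : (0:ℝ) ≤ 1 / 2) (by norm_num)
  simp only [g, smul_eq_mul] at hmid
  ring_nf at hmid ⊢
  linarith

lemma second_diff_le_of_abs_deriv_le {f f' : ℝ → ℝ} {C : ℝ} (hf : ∀ x, HasDerivAt f (f' x) x)
    (hC : ∀ x, |f' x| ≤ C) (s d : ℝ) :
    f (s + d) + f (s - d) - 2 * f s ≤ 2 * C * |d| := by
  have hlip (x y : ℝ) : |f y - f x| ≤ C * |y - x| :=
    convex_univ.norm_image_sub_le_of_norm_hasDerivWithin_le (fun x _ => (hf x).hasDerivWithinAt)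
      (fun x _ => hC x) (Set.mem_univ x) (Set.mem_univ y)
  have h₁ := hlip s (s + d)
  have h₂ := hlip s (s - d)
  simp only [add_sub_cancel_left, sub_sub_cancel_left, abs_neg] at h₁ h₂
  linarith [le_abs_self (f (s + d) - f s), le_abs_self (f (s - d) - f s)]

lemma continuous_phi : Continuous phi :=
  continuous_if_le continuous_id continuous_const continuousOn_const
    (continuousOn_const.div (by fun_prop) fun u (hu : 1 ≤ u) => pow_ne_zero 2 (by linarith))
    fun u (hu : u = 1) => by norm_num [hu]

lemma phi_nonneg (u : ℝ) : 0 ≤ phi u := by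
  unfold phi
  split_ifs <;> positivity

lemma phi_le_two (u : ℝ) : phi u ≤ 2 := by
  unfold phi
  split_ifs with hu
  · rfl
  · rw [div_le_iff₀ (by nlinarith)]
    nlinarith

lemma phi_le_of_nonneg {u : ℝ} (hu : 0 ≤ u) : phi u ≤ 8 / (1 + u) ^ 2 := by
  unfold phi
  split_ifs with hu1
  · rw [le_div_iff₀ (by positivity)]
    nlinarith
  · rfl

lemma M_abs (t : ℝ) : M |t| = M t := by
  simp only [M, abs_abs]

lemma M_of_abs_le_one {t : ℝ} (ht : |t| ≤ 1) : M t = t ^ 2 := by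
  have hphi : Set.EqOn (fun u => phi u * (|t| - u)) (fun u => 2 * (|t| - u)) (Set.uIcc 0 |t|) := by
    intro u hu
    rw [Set.uIcc_of_le (abs_nonneg t)] at hu
    simp only [phi, if_pos (hu.2.trans ht)]
  rw [M, integral_congr hphi, integral_const_mul,
    integral_sub intervalIntegrable_const intervalIntegrable_id]
  simp only [integral_const, integral_id, smul_eq_mul]
  rw [← sq_abs t]
  ring

lemma M_eq_integral (t : ℝ) : M t = ∫ u in (0:ℝ)..t, phi |u| * (t - u) := by
  have of_nonneg {t : ℝ} (ht : 0 ≤ t) : M t = ∫ u in (0:ℝ)..t, phi |u| * (t - u) := by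
    rw [M, abs_of_nonneg ht]
    refine integral_congr fun u hu => ?_
    rw [Set.uIcc_of_le ht] at hu
    simp only [abs_of_nonneg hu.1]
  rcases le_total 0 t with ht | ht
  · exact of_nonneg ht
  · rw [← M_abs, abs_of_nonpos ht, of_nonneg (neg_nonneg.mpr ht)]
    calc ∫ u in (0:ℝ)..-t, phi |u| * (-t - u)
        = -∫ u in (0:ℝ)..-t, phi |-u| * (t - -u) := by
          rw [← integral_neg]
          congr 1 with u
          rw [abs_neg]
          ring
      _ = ∫ u in (0:ℝ)..t, phi |u| * (t - u) := by
          rw [integral_comp_neg (fun u => phi |u| * (t - u)), neg_neg, neg_zero,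
            integral_symm, neg_neg]

noncomputable def Phi (t : ℝ) : ℝ := ∫ u in (0:ℝ)..t, phi |u|

lemma continuous_phi_abs : Continuous fun u => phi |u| := continuous_phi.comp continuous_abs

lemma hasDerivAt_M (t : ℝ) : HasDerivAt M (Phi t) t := by
  have hM : M = fun t => t * Phi t - ∫ u in (0:ℝ)..t, u * phi |u| := by
    funext t
    rw [M_eq_integral, Phi, ← integral_const_mul, ← integral_sub]
    · congr 1 with u
      ring
    · exact (continuous_const.mul continuous_phi_abs).intervalIntegrable _ _
    · exact (continuous_id.mul continuous_phi_abs).intervalIntegrable _ _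
  have hPhi : HasDerivAt Phi (phi |t|) t :=
    (continuous_phi_abs.integral_hasStrictDerivAt 0 t).hasDerivAt
  have hmoment : HasDerivAt (fun t => ∫ u in (0:ℝ)..t, u * phi |u|) (t * phi |t|) t :=
    ((continuous_id.mul continuous_phi_abs).integral_hasStrictDerivAt 0 t).hasDerivAt
  rw [hM]
  refine (((hasDerivAt_id t).fun_mul hPhi).fun_sub hmoment).congr_deriv ?_
  simp only [id]
  ring

lemma Phi_sub_Phi (x y : ℝ) : Phi y - Phi x = ∫ u in x..y, phi |u| :=
  integral_interval_sub_left (continuous_phi_abs.intervalIntegrable _ _)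
    (continuous_phi_abs.intervalIntegrable _ _)

lemma Phi_sub_le {x y : ℝ} (hxy : x ≤ y) : Phi y - Phi x ≤ 2 * (y - x) := by
  rw [Phi_sub_Phi]
  calc ∫ u in x..y, phi |u| ≤ ∫ _ in x..y, (2 : ℝ) :=
        integral_mono_on hxy (continuous_phi_abs.intervalIntegrable _ _)
          intervalIntegrable_const fun u _ => phi_le_two |u|
    _ = 2 * (y - x) := by simp only [integral_const, smul_eq_mul]; ring

lemma monotone_Phi : Monotone Phi := fun x y hxy => by
  have := integral_nonneg (μ := MeasureTheory.volume) hxy fun u _ => phi_nonneg |u|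
  linarith [Phi_sub_Phi x y]

lemma Phi_one : Phi 1 = 2 := by
  have hphi : Set.EqOn (fun u => phi |u|) (fun _ => 2) (Set.uIcc 0 1) := by
    intro u hu
    rw [Set.uIcc_of_le zero_le_one] at hu
    simp only [phi, abs_of_nonneg hu.1, if_pos hu.2]
  rw [Phi, integral_congr hphi]
  norm_num

lemma Phi_neg (t : ℝ) : Phi (-t) = -Phi t := by
  have := integral_comp_neg (a := 0) (b := t) (fun u => phi |u|)
  simp only [abs_neg, neg_zero] at this
  rw [Phi, Phi, this, integral_symm]

lemma Phi_le_of_nonneg {t : ℝ} (ht : 0 ≤ t) : Phi t ≤ 8 - 8 / (1 + t) := by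
  have hpos {u : ℝ} (hu : u ∈ Set.uIcc 0 t) : 0 < 1 + u := by
    rw [Set.uIcc_of_le ht] at hu
    linarith [hu.1]
  have hint : IntervalIntegrable (fun u => 8 / (1 + u) ^ 2) MeasureTheory.volume 0 t :=
    (continuousOn_const.div (by fun_prop) fun u hu => pow_ne_zero 2 (hpos hu).ne').intervalIntegrable
  calc Phi t ≤ ∫ u in (0:ℝ)..t, 8 / (1 + u) ^ 2 :=
        integral_mono_on ht (continuous_phi_abs.intervalIntegrable _ _) hint
          fun u hu => by
            rw [abs_of_nonneg hu.1]
            exact phi_le_of_nonneg hu.1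
    _ = 8 - 8 / (1 + t) := by
        rw [integral_eq_sub_of_hasDerivAt (f := fun u => -8 / (1 + u)) _ hint]
        · ring
        intro u hu
        refine ((hasDerivAt_const u (-8 : ℝ)).div ((hasDerivAt_id u).const_add 1)
          (hpos hu).ne').congr_deriv ?_
        simp only [id]
        ring

lemma abs_Phi_le (t : ℝ) : |Phi t| ≤ 8 := by
  have of_nonneg {t : ℝ} (ht : 0 ≤ t) : |Phi t| ≤ 8 := by
    have hnonneg : 0 ≤ Phi t := integral_nonneg ht fun u _ => phi_nonneg |u|
    have : 0 ≤ 8 / (1 + t) := by positivity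
    rw [abs_of_nonneg hnonneg]
    linarith [Phi_le_of_nonneg ht]
  rcases le_total 0 t with ht | ht
  · exact of_nonneg ht
  · simpa [Phi_neg] using of_nonneg (neg_nonneg.mpr ht)

lemma two_mul_abs_sub_one_le_M (t : ℝ) : 2 * |t| - 1 ≤ M t := by
  rcases le_total |t| 1 with ht | ht
  · rw [M_of_abs_le_one ht]
    nlinarith [sq_abs t, sq_nonneg (|t| - 1)]
  · have hM : Differentiable ℝ M := fun x => (hasDerivAt_M x).differentiableAt
    have hderiv : ∀ x ∈ interior (Set.Ici (1:ℝ)), 2 ≤ deriv M x := fun x hx => by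
      rw [interior_Ici] at hx
      rw [(hasDerivAt_M x).deriv, ← Phi_one]
      exact monotone_Phi (le_of_lt hx)
    have := (convex_Ici (1:ℝ)).mul_sub_le_image_sub_of_le_deriv hM.continuous.continuousOn
      hM.differentiableOn hderiv 1 Set.self_mem_Ici |t| ht ht
    have hM1 : M 1 = 1 := by norm_num [M_of_abs_le_one]
    linarith [M_abs t]

theorem stmt_5 (a b : ℝ) :
    M a + M b - 2 * M ((a + b) / 2) ≤ 16 * M ((a - b) / 2) := by
  have hquad := second_diff_le_of_deriv_sub_le hasDerivAt_M (fun _ _ => Phi_sub_le)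
    ((a + b) / 2) ((a - b) / 2)
  have hlin := second_diff_le_of_abs_deriv_le hasDerivAt_M abs_Phi_le ((a + b) / 2) ((a - b) / 2)
  rw [show (a + b) / 2 + (a - b) / 2 = a by ring, show (a + b) / 2 - (a - b) / 2 = b by ring]
    at hquad hlin
  rcases le_total |(a - b) / 2| 1 with hd | hd
  · rw [M_of_abs_le_one hd]
    nlinarith [sq_nonneg ((a - b) / 2)]
  · linarith [two_mul_abs_sub_one_le_M ((a - b) / 2)]
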